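/- arXiv:2308.02746 — 2 statements merged into one kernel-verified Lean document; each statement's English description precedes it below -/
import Mathlib

section
/- The derivative of the Tsallis loss with respect to the entropy index satisfies the explicit identity ∂/∂ψ ℓ_ψ(p, y) = (1/(ψ-1))[ℓ_1(p, y) - ℓ_ψ(p, y)] - ℓ_1(p, y)·ℓ_ψ(p, y), where ℓ_1(p, y) = -Σ_j y_j log p_j is the cross-entropy and ℓ_ψ(p, y) = (1/(ψ-1))(1 - Σ_j y_j p_j^{ψ-1}). -/
open Real

theorem tsallis_loss_deriv_identity (K : ℕ) (hK : 1 ≤ K) (p y : Fin K → ℝ)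
    (hp : ∀ j, 0 < p j) (hsum : ∑ j, p j = 1)
    (z : Fin K) (hyz : y z = 1) (hy0 : ∀ j, j ≠ z → y j = 0)
    (ψ : ℝ) (hψ : 1 < ψ) :
    HasDerivAt (fun s : ℝ => (1 / (s - 1)) * (1 - ∑ j, y j * p j ^ (s - 1)))
      ((1 / (ψ - 1)) *
          ((-∑ j, y j * Real.log (p j)) -
            (1 / (ψ - 1)) * (1 - ∑ j, y j * p j ^ (ψ - 1))) -
        (-∑ j, y j * Real.log (p j)) *
          ((1 / (ψ - 1)) * (1 - ∑ j, y j * p j ^ (ψ - 1)))) ψ := by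
  have ha : 0 < p z := hp z
  have hsum1 : ∀ s : ℝ, (∑ j, y j * p j ^ (s - 1)) = p z ^ (s - 1) := by
    intro s
    rw [Finset.sum_eq_single z]
    · rw [hyz, one_mul]
    · intro j _ hj; rw [hy0 j hj, zero_mul]
    · intro h; exact absurd (Finset.mem_univ z) h
  have hsum2 : (∑ j, y j * Real.log (p j)) = Real.log (p z) := by
    rw [Finset.sum_eq_single z]
    · rw [hyz, one_mul]
    · intro j _ hj; rw [hy0 j hj, zero_mul]
    · intro h; exact absurd (Finset.mem_univ z) h
  have hc : ψ - 1 ≠ 0 := sub_ne_zero.mpr (ne_of_gt hψ)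
  have hlin : HasDerivAt (fun s : ℝ => s - 1) 1 ψ := (hasDerivAt_id ψ).sub_const 1
  have h1 : HasDerivAt (fun s : ℝ => p z ^ (s - 1))
      (p z ^ (ψ - 1) * Real.log (p z) * 1) ψ :=
    (Real.hasStrictDerivAt_const_rpow ha (ψ - 1)).hasDerivAt.comp ψ hlin
  have h2 : HasDerivAt (fun s : ℝ => (s - 1)⁻¹) (-1 / (ψ - 1) ^ 2) ψ :=
    hlin.inv hc
  have h3 : HasDerivAt (fun s : ℝ => 1 - p z ^ (s - 1))
      (-(p z ^ (ψ - 1) * Real.log (p z) * 1)) ψ := h1.const_sub 1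
  have h4 : HasDerivAt (fun s : ℝ => (s - 1)⁻¹ * (1 - p z ^ (s - 1))) _ ψ := h2.mul h3
  have heq : (fun s : ℝ => (1 / (s - 1)) * (1 - ∑ j, y j * p j ^ (s - 1)))
      = fun s : ℝ => (s - 1)⁻¹ * (1 - p z ^ (s - 1)) := by
    funext s; rw [hsum1 s, one_div]
  rw [heq, hsum1, hsum2]
  convert h4 using 1
  field_simp
  ring
end

section
/- (Convergence sequence lemma) Let (a_n) and (b_n) be non-negative real sequences such that Σ a_n diverges, Σ a_n b_n converges, and there exists ν > 0 with |b_{n+1} - b_n| ≤ ν a_n for all n. Then b_n converges to 0. -/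
open Filter

theorem seq_convergence_lemma (a b : ℕ → ℝ)
    (ha : ∀ n, 0 ≤ a n) (hb : ∀ n, 0 ≤ b n)
    (hdiv : ¬ Summable a) (hconv : Summable (fun n => a n * b n))
    (ν : ℝ) (hν : 0 < ν) (hstep : ∀ n, |b (n + 1) - b n| ≤ ν * a n) :
    Tendsto b atTop (nhds 0) := by
  by_contra hcon
  rw [Metric.tendsto_atTop] at hcon
  push_neg at hcon
  obtain ⟨ε, hε, hfreq⟩ := hcon
  have hfreq' : ∀ N, ∃ n ≥ N, ε ≤ b n := by
    intro N
    obtain ⟨n, hn, h⟩ := hfreq N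
    refine ⟨n, hn, ?_⟩
    rw [Real.dist_eq, sub_zero, abs_of_nonneg (hb n)] at h
    linarith
  -- frequently b n ≤ ε/2
  have hlow : ∀ N, ∃ n, N ≤ n ∧ b n ≤ ε / 2 := by
    by_contra h
    push_neg at h
    obtain ⟨N, hN⟩ := h
    apply hdiv
    rw [← summable_nat_add_iff N]
    have h1 : Summable (fun n => a (n + N) * b (n + N)) :=
      (summable_nat_add_iff N).2 hconv
    refine Summable.of_nonneg_of_le (fun n => ha _) (fun n => ?_)
      (h1.mul_left (2 / ε))
    have hbn : ε / 2 < b (n + N) := hN (n + N) (Nat.le_add_left N n)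
    have han := ha (n + N)
    have h2 : (0:ℝ) < 2 / ε := by positivity
    have : ε * a (n + N) ≤ 2 * (a (n + N) * b (n + N)) := by nlinarith
    rw [div_mul_eq_mul_div, le_div_iff₀ hε]
    linarith
  -- Cauchy property of partial sums
  set S : ℕ → ℝ := fun n => ∑ i ∈ Finset.range n, a i * b i with hS
  have hcauchy : CauchySeq S := hconv.hasSum.tendsto_sum_nat.cauchySeq
  have hδ : (0:ℝ) < ε ^ 2 / (8 * ν) := by positivity
  obtain ⟨N, hN⟩ := Metric.cauchySeq_iff'.1 hcauchy _ hδ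
  -- pick n0 ≥ N with b n0 ≥ ε
  obtain ⟨n0, hn0N, hbn0⟩ := hfreq' N
  -- first m ≥ n0 with b m ≤ ε/2
  have hex : ∃ m, n0 ≤ m ∧ b m ≤ ε / 2 := hlow n0
  classical
  set m := Nat.find hex with hm
  obtain ⟨hmn0, hbm⟩ : n0 ≤ m ∧ b m ≤ ε / 2 := Nat.find_spec hex
  have hmid : ∀ k, n0 ≤ k → k < m → ε / 2 < b k := by
    intro k hk1 hk2
    by_contra h
    push_neg at h
    exact absurd ⟨hk1, h⟩ (Nat.find_min hex hk2)
  -- telescoping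
  have htel : ∑ i ∈ Finset.Ico n0 m, (b (i + 1) - b i) = b m - b n0 := by
    rw [Finset.sum_Ico_eq_sub _ hmn0, Finset.sum_range_sub, Finset.sum_range_sub]
    ring
  have hsum1 : ε / 2 ≤ ν * ∑ i ∈ Finset.Ico n0 m, a i := by
    have h1 : b n0 - b m ≤ ∑ i ∈ Finset.Ico n0 m, |b (i + 1) - b i| := by
      calc b n0 - b m = -(∑ i ∈ Finset.Ico n0 m, (b (i + 1) - b i)) := by
              rw [htel]; ring
        _ = ∑ i ∈ Finset.Ico n0 m, -(b (i + 1) - b i) := by rw [Finset.sum_neg_distrib]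
        _ ≤ ∑ i ∈ Finset.Ico n0 m, |b (i + 1) - b i| :=
            Finset.sum_le_sum fun i _ => neg_le_abs _
    have h2 : ∑ i ∈ Finset.Ico n0 m, |b (i + 1) - b i|
        ≤ ∑ i ∈ Finset.Ico n0 m, ν * a i :=
      Finset.sum_le_sum fun i _ => hstep i
    rw [← Finset.mul_sum] at h2
    have : ε / 2 ≤ b n0 - b m := by linarith
    linarith
  have hsum2 : ε ^ 2 / (4 * ν) ≤ ∑ i ∈ Finset.Ico n0 m, a i * b i := by
    have h1 : ∀ i ∈ Finset.Ico n0 m, ε / 2 * a i ≤ a i * b i := by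
      intro i hi
      rw [Finset.mem_Ico] at hi
      have := hmid i hi.1 hi.2
      have := ha i
      nlinarith
    calc ε ^ 2 / (4 * ν) = ε / 2 * (ε / 2 / ν) := by field_simp; ring
      _ ≤ ε / 2 * ∑ i ∈ Finset.Ico n0 m, a i := by
          have h3 : ε / 2 / ν ≤ ∑ i ∈ Finset.Ico n0 m, a i := by
            rw [div_le_iff₀ hν] at *
            linarith [hsum1]
          exact mul_le_mul_of_nonneg_left h3 (by positivity)
      _ = ∑ i ∈ Finset.Ico n0 m, ε / 2 * a i := by rw [Finset.mul_sum]
      _ ≤ ∑ i ∈ Finset.Ico n0 m, a i * b i := Finset.sum_le_sum h1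
  -- but the block sum is small
  have hblock : ∑ i ∈ Finset.Ico n0 m, a i * b i < ε ^ 2 / (4 * ν) := by
    have h1 := hN n0 hn0N
    have h2 := hN m (le_trans hn0N hmn0)
    have h3 : ∑ i ∈ Finset.Ico n0 m, a i * b i = S m - S n0 :=
      Finset.sum_Ico_eq_sub _ hmn0
    rw [Real.dist_eq] at h1 h2
    have e1 := abs_lt.1 h1
    have e2 := abs_lt.1 h2
    have : ε ^ 2 / (8 * ν) + ε ^ 2 / (8 * ν) = ε ^ 2 / (4 * ν) := by
      field_simp; ring
    rw [h3]
    linarith [e1.1, e1.2, e2.1, e2.2]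
  linarith
end
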